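/- arXiv:2305.04065 — 5 statements merged into one kernel-verified Lean document; each statement's English description precedes it below -/
import Mathlib

section
/- Let d ≥ 3, and let γ, w_m be reals with w_m ≠ 1 and 1 - 2γ(1+w_m)/(1-w_m) > 0 and 1 - 2γ(d-1)(1+w_m)/(d-2) ≠ 0. Then the point (x_φ, x_V) = (√(1 - 2γ(1+w_m)/(1-w_m)), 0) satisfies the fixed-point equations of the autonomous system, i.e., both right-hand sides of the evolution equations for x_φ and x_V vanish at this point. -/
/-!
On the axis `x_V = 0` the `x_V`-equation vanishes identically, and the `x_φ`-equation factors as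
`(x_φ / B) · (A - 2B + (1 - w_m) x_φ²)` with `A = (1 - 2γd/(d-2))(1 + w_m)`. Substituting
`x_φ² = 1 - 2γ(1+w_m)/(1-w_m)` makes the bracket vanish: the `γ`-terms cancel because
`-2d + 4(d-1) - 2(d-2) = 0`.
-/

lemma kinetic_bracket_eq_zero {d γ w : ℝ} (hd : d - 2 ≠ 0) (hw : 1 - w ≠ 0) :
    (1 - 2*γ*d/(d-2))*(1+w) - 2*(1 - 2*γ*(d-1)*(1+w)/(d-2))
      + (1-w)*(1 - 2*γ*(1+w)/(1-w)) = 0 := by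
  field_simp
  ring

lemma linear_add_cubic_factor {K : Type*} [Field K] {A B c x : K} (hB : B ≠ 0) :
    (A/B - 2)*x + (c/B)*x^3 = x/B * (A - 2*B + c*x^2) := by
  field_simp

theorem stmt_1 (d : ℕ) (hd : 3 ≤ d) (γ wm lV : ℝ)
    (hw : wm ≠ 1)
    (hpos : 0 < 1 - 2*γ*(1+wm)/(1-wm))
    (B : ℝ) (hB : B = 1 - 2*γ*((d:ℝ)-1)*(1+wm)/((d:ℝ)-2)) (hB0 : B ≠ 0)
    (xφ xV : ℝ)
    (hxφ : xφ = Real.sqrt (1 - 2*γ*(1+wm)/(1-wm))) (hxV : xV = 0) :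
    ((1 - 2*γ*(d:ℝ)/((d:ℝ)-2))*(1+wm)/B - 2)*xφ
      + 2*lV*Real.sqrt (((d:ℝ)-2)/((d:ℝ)-1))*xV^2
      + ((1-wm)/B)*xφ^3 - ((1+wm)/B)*xφ*xV^2 = 0
    ∧ ((1 - 2*γ*(d:ℝ)/((d:ℝ)-2))*(1+wm)/B)*xV
      - lV*Real.sqrt (((d:ℝ)-2)/((d:ℝ)-1))*xφ*xV
      + ((1-wm)/B)*xV*xφ^2 - ((1+wm)/B)*xV^3 = 0 := by
  have hd2 : (d:ℝ) - 2 ≠ 0 := by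
    have : (3:ℝ) ≤ d := by exact_mod_cast hd
    linarith
  have hsq : xφ^2 = 1 - 2*γ*(1+wm)/(1-wm) := by
    rw [hxφ, Real.sq_sqrt hpos.le]
  have hbracket := kinetic_bracket_eq_zero (γ := γ) hd2 (sub_ne_zero.mpr hw.symm)
  subst hxV
  refine ⟨?_, by ring⟩
  simp only [zero_pow two_ne_zero, mul_zero, add_zero, sub_zero]
  rw [linear_add_cubic_factor hB0, hsq, hB, hbracket, mul_zero]
end

section
/- Let d ≥ 3, and let γ, w_m, λ_V be reals with 1 - 2γ(d-1)(1+w_m)/(d-2) ≠ 0 and λ_V ≠ 0. Suppose 0 < A < 2 and A satisfies the quadratic relation (3 - w_m) A² - 2A[(1+w_m) + λ_V²(d-2)/(d-1) · (1 - 2γ(d-1)(1+w_m)/(d-2))] + 2λ_V²(d-2)(1+w_m)/(d-1) · (1 - 2γd/(d-2)) = 0. Then the point (x_φ, x_V) = ((1/λ_V)√((d-1)/(d-2)) A, (1/λ_V)√((d-1)(2-A)A/(2(d-2)))) is a fixed point of the autonomous system. -/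
/-!
Write `c = λ_V √((d-2)/(d-1))` and `P = (1 - 2γd/(d-2))(1+w_m)`. At CP4 one has `c x_φ = A` and
`2 c x_V² = (2 - A) x_φ`, and with these two relations the right-hand sides of the system become
`x_φ G` and `x_V G` for the single factor `G = P/B - A + (1-w_m)/B x_φ² - (1+w_m)/B x_V²`.
Substituting the coordinates of CP4, `2 B λ_V² (d-2)/(d-1) G` is exactly the quadratic in `A`.
-/

open Real

namespace KleinGordonRastall

theorem fixedPoint_of_commonFactor_eq_zero {P B w lV t A xφ xV : ℝ} (hφ : lV * t * xφ = A)
    (hV : 2 * lV * t * xV ^ 2 = (2 - A) * xφ)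
    (hG : P / B - A + (1 - w) / B * xφ ^ 2 - (1 + w) / B * xV ^ 2 = 0) :
    (P / B - 2) * xφ + 2 * lV * t * xV ^ 2 + (1 - w) / B * xφ ^ 3 - (1 + w) / B * xφ * xV ^ 2 = 0
    ∧ P / B * xV - lV * t * xφ * xV + (1 - w) / B * xV * xφ ^ 2 - (1 + w) / B * xV ^ 3 = 0 :=
  ⟨by linear_combination xφ * hG + hV, by linear_combination xV * hG - xV * hφ⟩

variable {d lV A xφ xV : ℝ}

theorem sqrt_ratio_mul_sqrt_ratio_inv (hd : 2 < d) :
    √((d - 2) / (d - 1)) * √((d - 1) / (d - 2)) = 1 := by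
  rw [← sqrt_mul (by apply div_nonneg <;> linarith), div_mul_div_comm, mul_comm, div_self (by nlinarith), sqrt_one]

theorem coupling_mul_xφ (hd : 2 < d) (hlV : lV ≠ 0)
    (hxφ : xφ = 1 / lV * √((d - 1) / (d - 2)) * A) :
    lV * √((d - 2) / (d - 1)) * xφ = A := by
  have h := sqrt_ratio_mul_sqrt_ratio_inv hd
  rw [hxφ]
  field_simp
  linear_combination A * h

theorem xφ_sq (hd : 2 < d) (hxφ : xφ = 1 / lV * √((d - 1) / (d - 2)) * A) :
    xφ ^ 2 = (d - 1) * A ^ 2 / ((d - 2) * lV ^ 2) := by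
  rw [hxφ, mul_pow, mul_pow, sq_sqrt (by apply div_nonneg <;> linarith)]
  field_simp

theorem xV_sq (hd : 2 < d) (hA : 0 ≤ (2 - A) * A)
    (hxV : xV = 1 / lV * √((d - 1) * (2 - A) * A / (2 * (d - 2)))) :
    xV ^ 2 = (d - 1) * (2 - A) * A / (2 * (d - 2) * lV ^ 2) := by
  rw [hxV, mul_pow, sq_sqrt (div_nonneg (by nlinarith) (by linarith))]
  field_simp

theorem two_coupling_mul_xV_sq (hd : 2 < d) (hlV : lV ≠ 0) (hA : 0 ≤ (2 - A) * A)
    (hxφ : xφ = 1 / lV * √((d - 1) / (d - 2)) * A)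
    (hxV : xV = 1 / lV * √((d - 1) * (2 - A) * A / (2 * (d - 2)))) :
    2 * lV * √((d - 2) / (d - 1)) * xV ^ 2 = (2 - A) * xφ := by
  have h := sqrt_ratio_mul_sqrt_ratio_inv hd
  have hs := sq_sqrt (show 0 ≤ (d - 1) / (d - 2) by apply div_nonneg <;> linarith)
  have h1 : d - 1 ≠ 0 := by linarith
  have h2 : d - 2 ≠ 0 := by linarith
  rw [xV_sq hd hA hxV, hxφ]
  field_simp
  field_simp at hs
  linear_combination (d - 2) * A * (2 - A) * √((d - 1) / (d - 2)) * h
    - A * (2 - A) * √((d - 2) / (d - 1)) * hs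

theorem commonFactor_eq_zero {γ w B : ℝ} (hd : 2 < d) (hlV : lV ≠ 0) (hB0 : B ≠ 0)
    (hquad : (3 - w) * A ^ 2 - 2 * A * ((1 + w) + lV ^ 2 * (d - 2) / (d - 1) * B)
      + 2 * lV ^ 2 * (d - 2) * (1 + w) / (d - 1) * (1 - 2 * γ * d / (d - 2)) = 0)
    (hφ : xφ ^ 2 = (d - 1) * A ^ 2 / ((d - 2) * lV ^ 2))
    (hV : xV ^ 2 = (d - 1) * (2 - A) * A / (2 * (d - 2) * lV ^ 2)) :
    (1 - 2 * γ * d / (d - 2)) * (1 + w) / B - A + (1 - w) / B * xφ ^ 2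
      - (1 + w) / B * xV ^ 2 = 0 := by
  have h1 : d - 1 ≠ 0 := by linarith
  have h2 : d - 2 ≠ 0 := by linarith
  rw [hφ, hV]
  field_simp
  field_simp at hquad
  linear_combination hquad

end KleinGordonRastall

open KleinGordonRastall in
theorem stmt_2_general (d : ℕ) (hd : 3 ≤ d) (γ wm lV : ℝ) (hlV : lV ≠ 0)
    (B : ℝ) (hB0 : B ≠ 0)
    (A : ℝ) (hA0 : 0 < A) (hA2 : A < 2)
    (hquad : (3 - wm)*A^2
      - 2*A*((1+wm) + lV^2*((d:ℝ)-2)/((d:ℝ)-1) * B)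
      + 2*lV^2*((d:ℝ)-2)*(1+wm)/((d:ℝ)-1) * (1 - 2*γ*(d:ℝ)/((d:ℝ)-2)) = 0)
    (xφ xV : ℝ)
    (hxφ : xφ = (1/lV) * Real.sqrt (((d:ℝ)-1)/((d:ℝ)-2)) * A)
    (hxV : xV = (1/lV) * Real.sqrt (((d:ℝ)-1)*(2-A)*A/(2*((d:ℝ)-2)))) :
    ((1 - 2*γ*(d:ℝ)/((d:ℝ)-2))*(1+wm)/B - 2)*xφ
      + 2*lV*Real.sqrt (((d:ℝ)-2)/((d:ℝ)-1))*xV^2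
      + ((1-wm)/B)*xφ^3 - ((1+wm)/B)*xφ*xV^2 = 0
    ∧ ((1 - 2*γ*(d:ℝ)/((d:ℝ)-2))*(1+wm)/B)*xV
      - lV*Real.sqrt (((d:ℝ)-2)/((d:ℝ)-1))*xφ*xV
      + ((1-wm)/B)*xV*xφ^2 - ((1+wm)/B)*xV^3 = 0 := by
  have hd2 : (2:ℝ) < d := by
    have : (3:ℝ) ≤ d := by exact_mod_cast hd
    linarith
  have hA : 0 ≤ (2 - A) * A := by nlinarith
  exact fixedPoint_of_commonFactor_eq_zero (coupling_mul_xφ hd2 hlV hxφ)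
    (two_coupling_mul_xV_sq hd2 hlV hA hxφ hxV)
    (commonFactor_eq_zero hd2 hlV hB0 hquad (xφ_sq hd2 hxφ) (xV_sq hd2 hA hxV))

theorem stmt_2 (d : ℕ) (hd : 3 ≤ d) (γ wm lV : ℝ) (hlV : lV ≠ 0)
    (B : ℝ) (hB : B = 1 - 2*γ*((d:ℝ)-1)*(1+wm)/((d:ℝ)-2)) (hB0 : B ≠ 0)
    (A : ℝ) (hA0 : 0 < A) (hA2 : A < 2)
    (hquad : (3 - wm)*A^2
      - 2*A*((1+wm) + lV^2*((d:ℝ)-2)/((d:ℝ)-1) * B)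
      + 2*lV^2*((d:ℝ)-2)*(1+wm)/((d:ℝ)-1) * (1 - 2*γ*(d:ℝ)/((d:ℝ)-2)) = 0)
    (xφ xV : ℝ)
    (hxφ : xφ = (1/lV) * Real.sqrt (((d:ℝ)-1)/((d:ℝ)-2)) * A)
    (hxV : xV = (1/lV) * Real.sqrt (((d:ℝ)-1)*(2-A)*A/(2*((d:ℝ)-2)))) :
    ((1 - 2*γ*(d:ℝ)/((d:ℝ)-2))*(1+wm)/B - 2)*xφ
      + 2*lV*Real.sqrt (((d:ℝ)-2)/((d:ℝ)-1))*xV^2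
      + ((1-wm)/B)*xφ^3 - ((1+wm)/B)*xφ*xV^2 = 0
    ∧ ((1 - 2*γ*(d:ℝ)/((d:ℝ)-2))*(1+wm)/B)*xV
      - lV*Real.sqrt (((d:ℝ)-2)/((d:ℝ)-1))*xφ*xV
      + ((1-wm)/B)*xV*xφ^2 - ((1+wm)/B)*xV^3 = 0 :=
  stmt_2_general d hd γ wm lV hlV B hB0 A hA0 hA2 hquad xφ xV hxφ hxV
end

section
/- Let d ≥ 3 and w_m ≠ 1. The Jacobian of the KGR autonomous system (Λ = 0) at the fixed point CP2 = (√(1 - 2γ(1+w_m)/(1-w_m)), 0), scaled by 2/(d-1), is the diagonal matrix with entries μ1 = 2[(1-w_m) - 2γ(1+w_m)]/[1 - 2γ(d-1)(1+w_m)/(d-2)] and μ2 = 2 - λ_V √((d-2)/(d-1)) √(1 - 2γ(1+w_m)/(1-w_m)), assuming 1 - 2γ(1+w_m)/(1-w_m) > 0 and 1 - 2γ(d-1)(1+w_m)/(d-2) ≠ 0. -/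
/-!
On the axis `y = 0` every off-diagonal entry of the Jacobian of the KGR system carries a factor
`y`, so the Jacobian at `(s, 0)` is diagonal with entries `a - 2 + 3 c s²` and `a - b s + c s²`.
At CP2 the first component vanishes, i.e. `a + c s² = 2`, which turns these entries into
`2 c s²` and `2 - b s`; with `(1 - w_m) s² = (1 - w_m) - 2γ(1 + w_m)` these are `μ1` and `μ2`.
-/

open ContinuousLinearMap

def kgrSystem (a b c e : ℝ) (p : ℝ × ℝ) : ℝ × ℝ :=
  ((a - 2) * p.1 + 2 * b * p.2 ^ 2 + c * p.1 ^ 3 - e * p.1 * p.2 ^ 2,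
   a * p.2 - b * p.1 * p.2 + c * p.2 * p.1 ^ 2 - e * p.2 ^ 3)

theorem hasFDerivAt_kgrSystem_axis (a b c e s : ℝ) :
    HasFDerivAt (kgrSystem a b c e)
      (((a - 2 + 3 * c * s ^ 2) • fst ℝ ℝ ℝ).prod ((a - b * s + c * s ^ 2) • snd ℝ ℝ ℝ))
      (s, 0) := by
  have hx : HasFDerivAt (fun p : ℝ × ℝ => p.1) (fst ℝ ℝ ℝ) (s, (0:ℝ)) := hasFDerivAt_fst
  have hy : HasFDerivAt (fun p : ℝ × ℝ => p.2) (snd ℝ ℝ ℝ) (s, (0:ℝ)) := hasFDerivAt_snd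
  have h := ((((hx.const_mul (a - 2)).add ((hy.pow 2).const_mul (2 * b))).add
      ((hx.pow 3).const_mul c)).sub ((hx.const_mul e).mul (hy.pow 2))).prodMk
    ((((hy.const_mul a).sub ((hx.const_mul b).mul hy)).add ((hy.const_mul c).mul (hx.pow 2))).sub
      ((hy.pow 3).const_mul e))
  refine h.congr_fderiv ?_
  ext <;> simp <;> ring

theorem fderiv_kgrSystem_of_fixed (a b c e s : ℝ) (hfix : a + c * s ^ 2 = 2) (v : ℝ × ℝ) :
    fderiv ℝ (kgrSystem a b c e) (s, 0) v = (2 * c * s ^ 2 * v.1, (2 - b * s) * v.2) := by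
  rw [(hasFDerivAt_kgrSystem_axis a b c e s).fderiv]
  change ((a - 2 + 3 * c * s ^ 2) * v.1, (a - b * s + c * s ^ 2) * v.2) = _
  congr 1
  · linear_combination v.1 * hfix
  · linear_combination v.2 * hfix

theorem kgrSystem_fixed_point_condition {d γ wm B s : ℝ} (hd : d ≠ 2)
    (hB : B = 1 - 2 * γ * (d - 1) * (1 + wm) / (d - 2)) (hB0 : B ≠ 0)
    (hs : (1 - wm) * s ^ 2 = (1 - wm) - 2 * γ * (1 + wm)) :
    (1 - 2 * γ * d / (d - 2)) * (1 + wm) / B + (1 - wm) / B * s ^ 2 = 2 := by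
  have hd2 : d - 2 ≠ 0 := sub_ne_zero.mpr hd
  rw [div_mul_eq_mul_div, ← add_div, div_eq_iff hB0, hs, hB]
  field_simp
  ring

theorem stmt_8 (d : ℕ) (hd : 3 ≤ d) (γ wm lV : ℝ) (hw : wm ≠ 1)
    (hpos : 0 < 1 - 2*γ*(1+wm)/(1-wm))
    (B : ℝ) (hB : B = 1 - 2*γ*((d:ℝ)-1)*(1+wm)/((d:ℝ)-2)) (hB0 : B ≠ 0)
    (G : ℝ × ℝ → ℝ × ℝ)
    (hG : ∀ p : ℝ × ℝ, G p =
      ( ((1 - 2*γ*(d:ℝ)/((d:ℝ)-2))*(1+wm)/B - 2)*p.1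
          + 2*lV*Real.sqrt (((d:ℝ)-2)/((d:ℝ)-1))*p.2^2
          + ((1-wm)/B)*p.1^3 - ((1+wm)/B)*p.1*p.2^2 ,
        ((1 - 2*γ*(d:ℝ)/((d:ℝ)-2))*(1+wm)/B)*p.2
          - lV*Real.sqrt (((d:ℝ)-2)/((d:ℝ)-1))*p.1*p.2
          + ((1-wm)/B)*p.2*p.1^2 - ((1+wm)/B)*p.2^3 ))
    (μ1 μ2 : ℝ)
    (hμ1 : μ1 = 2*((1-wm) - 2*γ*(1+wm))/B)
    (hμ2 : μ2 = 2 - lV * Real.sqrt (((d:ℝ)-2)/((d:ℝ)-1))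
      * Real.sqrt (1 - 2*γ*(1+wm)/(1-wm))) :
    ∀ v : ℝ × ℝ,
      fderiv ℝ G (Real.sqrt (1 - 2*γ*(1+wm)/(1-wm)), 0) v
        = (μ1 * v.1, μ2 * v.2) := by
  intro v
  set s := Real.sqrt (1 - 2*γ*(1+wm)/(1-wm))
  have hd2 : (d : ℝ) ≠ 2 := by
    have : (3 : ℝ) ≤ d := by exact_mod_cast hd
    linarith
  have hs : (1 - wm) * s ^ 2 = (1 - wm) - 2 * γ * (1 + wm) := by
    have : 1 - wm ≠ 0 := sub_ne_zero.mpr hw.symm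
    rw [Real.sq_sqrt hpos.le]
    field_simp
  have hGk : G = kgrSystem ((1 - 2*γ*(d:ℝ)/((d:ℝ)-2))*(1+wm)/B)
      (lV * Real.sqrt (((d:ℝ)-2)/((d:ℝ)-1))) ((1-wm)/B) ((1+wm)/B) := by
    funext p
    rw [hG p, kgrSystem]
    congr 1
    ring
  rw [hGk, fderiv_kgrSystem_of_fixed _ _ _ _ _
    (kgrSystem_fixed_point_condition hd2 hB hB0 hs), hμ1, hμ2, ← hs]
  congr 1
  ring
end

section
/- Let d ≥ 3, γ, w_m real with B := 1 - 2γ(d-1)(1+w_m)/(d-2) ≠ 0. At the fixed point CP2 with x_φ² = 1 - 2γ(1+w_m)/(1-w_m) and x_V = 0 (assuming w_m ≠ 1 and this quantity is nonnegative), the deceleration parameter q = -1 + ((d-1)/(2[1-2γ(d-1)/(d-2)])) · [1 - 2γd/(d-2) + w_m x_m² + x_φ² - x_V²], where x_m² is determined by the constraint B x_m² + (1-4γ(d-1)/(d-2)) x_φ² + x_V² = 1 - 2γd/(d-2), equals q = d - 2. In particular q > 0 for all d ≥ 3, so CP2 never describes an accelerating universe. -/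
/-! At CP2 the constraint forces the matter variable to `x_m² = 4γ/(1 - w_m)`. With this value
the bracket in `q` collapses to twice the prefactor's denominator `1 - 2γ(d-1)/(d-2)`, so
`q = -1 + (d - 1) = d - 2`, independently of `γ` and `w_m`. -/

section CP2

variable {d γ wm : ℝ}

lemma xm_sq_eq_of_constraint_at_CP2 {xm : ℝ} (hd : d - 2 ≠ 0) (hw : 1 - wm ≠ 0)
    (hB : 1 - 2*γ*(d-1)*(1+wm)/(d-2) ≠ 0)
    (hcon : (1 - 2*γ*(d-1)*(1+wm)/(d-2)) * xm^2
      + (1 - 4*γ*(d-1)/(d-2)) * (1 - 2*γ*(1+wm)/(1-wm)) = 1 - 2*γ*d/(d-2)) :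
    xm^2 = 4*γ/(1-wm) := by
  have hfactor : 1 - 2*γ*d/(d-2) - (1 - 4*γ*(d-1)/(d-2)) * (1 - 2*γ*(1+wm)/(1-wm))
      = (1 - 2*γ*(d-1)*(1+wm)/(d-2)) * (4*γ/(1-wm)) := by
    field_simp
    ring
  exact mul_left_cancel₀ hB (by linear_combination hcon + hfactor)

lemma deceleration_bracket_at_CP2 (hd : d - 2 ≠ 0) (hw : 1 - wm ≠ 0) :
    1 - 2*γ*d/(d-2) + wm*(4*γ/(1-wm)) + (1 - 2*γ*(1+wm)/(1-wm))
      = 2*(1 - 2*γ*(d-1)/(d-2)) := by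
  field_simp
  ring

end CP2

theorem stmt_13_general (d : ℕ) (hd : 3 ≤ d) (γ wm : ℝ) (hw : wm ≠ 1)
    (B : ℝ) (hB : B = 1 - 2*γ*((d:ℝ)-1)*(1+wm)/((d:ℝ)-2)) (hB0 : B ≠ 0)
    (hγ : 1 - 2*γ*((d:ℝ)-1)/((d:ℝ)-2) ≠ 0)
    (xm xφ xV : ℝ)
    (hxφ : xφ^2 = 1 - 2*γ*(1+wm)/(1-wm))
    (hxV : xV = 0)
    (hcon : B*xm^2 + (1 - 4*γ*((d:ℝ)-1)/((d:ℝ)-2))*xφ^2 + xV^2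
      = 1 - 2*γ*(d:ℝ)/((d:ℝ)-2))
    (q : ℝ)
    (hq : q = -1 + ((d:ℝ)-1)/(2*(1 - 2*γ*((d:ℝ)-1)/((d:ℝ)-2)))
      * (1 - 2*γ*(d:ℝ)/((d:ℝ)-2) + wm*xm^2 + xφ^2 - xV^2)) :
    q = (d:ℝ) - 2 ∧ 0 < q := by
  have hd3 : (3:ℝ) ≤ d := by exact_mod_cast hd
  have hd2 : (d:ℝ) - 2 ≠ 0 := by linarith
  have hw' : 1 - wm ≠ 0 := sub_ne_zero.mpr hw.symm
  subst hB hxV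
  rw [hxφ] at hcon hq
  have hxm := xm_sq_eq_of_constraint_at_CP2 hd2 hw' hB0 (by simpa using hcon)
  have hq_eq : q = (d:ℝ) - 2 := by
    rw [hq, hxm, zero_pow two_ne_zero, sub_zero, deceleration_bracket_at_CP2 hd2 hw',
      div_mul_cancel₀ _ (mul_ne_zero two_ne_zero hγ)]
    ring
  exact ⟨hq_eq, by linarith⟩

theorem stmt_13 (d : ℕ) (hd : 3 ≤ d) (γ wm : ℝ) (hw : wm ≠ 1)
    (B : ℝ) (hB : B = 1 - 2*γ*((d:ℝ)-1)*(1+wm)/((d:ℝ)-2)) (hB0 : B ≠ 0)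
    (hγ : 1 - 2*γ*((d:ℝ)-1)/((d:ℝ)-2) ≠ 0)
    (xm xφ xV : ℝ)
    (hxφ : xφ^2 = 1 - 2*γ*(1+wm)/(1-wm)) (hxφ0 : 0 ≤ 1 - 2*γ*(1+wm)/(1-wm))
    (hxV : xV = 0)
    (hcon : B*xm^2 + (1 - 4*γ*((d:ℝ)-1)/((d:ℝ)-2))*xφ^2 + xV^2
      = 1 - 2*γ*(d:ℝ)/((d:ℝ)-2))
    (q : ℝ)
    (hq : q = -1 + ((d:ℝ)-1)/(2*(1 - 2*γ*((d:ℝ)-1)/((d:ℝ)-2)))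
      * (1 - 2*γ*(d:ℝ)/((d:ℝ)-2) + wm*xm^2 + xφ^2 - xV^2)) :
    q = (d:ℝ) - 2 ∧ 0 < q :=
  stmt_13_general d hd γ wm hw B hB hB0 hγ xm xφ xV hxφ hxV hcon q hq
end

section
/- Let d ≥ 3 with γ < (d-2)/(2d), w_m > -1, 0 < 1 - 2γ(d-1)(1+w_m)/(d-2), and 0 ≤ x_Λ ≤ √(1-2γd/(d-2)). Then the point (0, √(1 - 2γd/(d-2) - x_Λ²), x_Λ) is a fixed point of the Λ > 0 extended KGR autonomous system (with λ_V = 0), and one of its Jacobian eigenvalues is exactly 0, namely μ3 = 0; the other two eigenvalues are μ1 = -2 and μ2 = -2(1+w_m)(1-2γd/(d-2))/(1-2γ(d-1)(1+w_m)/(d-2)) < 0. Hence this fixed point is non-hyperbolic. -/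
/-!
The vector field has the form `G q = f q • q - (2 q₁) • e₁` with `f` a quadratic polynomial.
Hence the circle `q₁ = 0, f q = 0` consists of fixed points, and at such a point `q` the
differential is `v ↦ (Df(q) v) • q - (2 v₁) • e₁`. It multiplies `e₁` by `-2` and `q` by
`Df(q) q = -2 c`, and it kills the tangent vector `(0, z, -y)` of the circle of fixed points,
which is why one eigenvalue vanishes.
-/

/-- With `A = 1 - 2γd/(d-2)`, the system of the statement is
`kgrField ((1 - w_m)/B) ((1 + w_m)/B) (A (1 + w_m)/B)`. -/
noncomputable def kgrField (a b c : ℝ) (q : ℝ × ℝ × ℝ) : ℝ × ℝ × ℝ :=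
  (c + a * q.1 ^ 2 - b * (q.2.1 ^ 2 + q.2.2 ^ 2)) • q - (2 * q.1) • ((1 : ℝ), (0 : ℝ), (0 : ℝ))

theorem fderiv_kgrField_apply (a b c : ℝ) (q v : ℝ × ℝ × ℝ) :
    fderiv ℝ (kgrField a b c) q v =
      (c + a * q.1 ^ 2 - b * (q.2.1 ^ 2 + q.2.2 ^ 2)) • v
        + (2 * a * q.1 * v.1 - 2 * b * (q.2.1 * v.2.1 + q.2.2 * v.2.2)) • q
        - (2 * v.1) • ((1 : ℝ), (0 : ℝ), (0 : ℝ)) := by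
  have h₁ : HasFDerivAt (fun q : ℝ × ℝ × ℝ => q.1) (ContinuousLinearMap.fst ℝ ℝ (ℝ × ℝ)) q :=
    hasFDerivAt_fst
  have h₂ : HasFDerivAt (fun q : ℝ × ℝ × ℝ => q.2.1)
      ((ContinuousLinearMap.fst ℝ ℝ ℝ).comp (ContinuousLinearMap.snd ℝ ℝ (ℝ × ℝ))) q :=
    hasFDerivAt_fst.comp q hasFDerivAt_snd
  have h₃ : HasFDerivAt (fun q : ℝ × ℝ × ℝ => q.2.2)
      ((ContinuousLinearMap.snd ℝ ℝ ℝ).comp (ContinuousLinearMap.snd ℝ ℝ (ℝ × ℝ))) q :=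
    hasFDerivAt_snd.comp q hasFDerivAt_snd
  have hf := (((h₁.pow 2).const_mul a).const_add c).sub (((h₂.pow 2).add (h₃.pow 2)).const_mul b)
  have hG : HasFDerivAt (kgrField a b c) _ q :=
    (hf.smul (hasFDerivAt_id q)).sub ((h₁.const_mul 2).smul_const ((1 : ℝ), (0 : ℝ), (0 : ℝ)))
  rw [hG.fderiv]
  simp only [sub_apply, add_apply, smul_apply, ContinuousLinearMap.id_apply,
    ContinuousLinearMap.smulRight_apply, ContinuousLinearMap.comp_apply,
    ContinuousLinearMap.coe_fst', ContinuousLinearMap.coe_snd', Pi.sub_apply, Pi.add_apply, id_eq,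
    smul_eq_mul]
  module

section FixedCircle

variable {a b c y z : ℝ}

theorem kgrField_zero_fst (h : b * (y ^ 2 + z ^ 2) = c) : kgrField a b c (0, y, z) = 0 := by
  simp only [kgrField, h]
  simp

theorem fderiv_kgrField_zero_fst_apply (h : b * (y ^ 2 + z ^ 2) = c) (v : ℝ × ℝ × ℝ) :
    fderiv ℝ (kgrField a b c) (0, y, z) v =
      (-2 * b * (y * v.2.1 + z * v.2.2)) • ((0 : ℝ), y, z)
        - (2 * v.1) • ((1 : ℝ), (0 : ℝ), (0 : ℝ)) := by
  rw [fderiv_kgrField_apply, ← h]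
  module

theorem fderiv_kgrField_zero_fst_apply_tangent (h : b * (y ^ 2 + z ^ 2) = c) :
    fderiv ℝ (kgrField a b c) (0, y, z) (0, z, -y) = 0 := by
  rw [fderiv_kgrField_zero_fst_apply h]
  module

theorem fderiv_kgrField_zero_fst_apply_fst_axis (h : b * (y ^ 2 + z ^ 2) = c) :
    fderiv ℝ (kgrField a b c) (0, y, z) (1, 0, 0) = (-2 : ℝ) • ((1 : ℝ), (0 : ℝ), (0 : ℝ)) := by
  rw [fderiv_kgrField_zero_fst_apply h]
  module

theorem fderiv_kgrField_zero_fst_apply_self (h : b * (y ^ 2 + z ^ 2) = c) :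
    fderiv ℝ (kgrField a b c) (0, y, z) (0, y, z) = (-2 * c) • ((0 : ℝ), y, z) := by
  rw [fderiv_kgrField_zero_fst_apply h, ← h]
  module

end FixedCircle

theorem one_sub_two_mul_mul_div_pos {d γ : ℝ} (hd : 2 < d) (hγ : γ < (d - 2) / (2 * d)) :
    0 < 1 - 2 * γ * d / (d - 2) := by
  rw [lt_div_iff₀ (by positivity)] at hγ
  rw [sub_pos, div_lt_one (by linarith)]
  linarith

theorem stmt_18_general (d : ℕ) (hd : 3 ≤ d) (γ wm : ℝ)
    (hγ : γ < ((d:ℝ)-2)/(2*(d:ℝ))) (hw : -1 < wm)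
    (B : ℝ) (hB0 : 0 < B)
    (xΛ : ℝ) (hxΛ0 : 0 ≤ xΛ)
    (hxΛ1 : xΛ ≤ Real.sqrt (1 - 2*γ*(d:ℝ)/((d:ℝ)-2)))
    (G : ℝ × ℝ × ℝ → ℝ × ℝ × ℝ)
    (hG : ∀ p : ℝ × ℝ × ℝ, G p =
      ( ((1 - 2*γ*(d:ℝ)/((d:ℝ)-2))*(1+wm)/B - 2)*p.1
          + ((1-wm)/B)*p.1^3 - ((1+wm)/B)*p.1*(p.2.1^2 + p.2.2^2) ,
        ((1 - 2*γ*(d:ℝ)/((d:ℝ)-2))*(1+wm)/B)*p.2.1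
          + ((1-wm)/B)*p.2.1*p.1^2 - ((1+wm)/B)*p.2.1*(p.2.1^2 + p.2.2^2) ,
        ((1 - 2*γ*(d:ℝ)/((d:ℝ)-2))*(1+wm)/B)*p.2.2
          + ((1-wm)/B)*p.2.2*p.1^2
          - ((1+wm)/B)*p.2.2*(p.2.1^2 + p.2.2^2) ))
    (p : ℝ × ℝ × ℝ)
    (hp : p = (0, Real.sqrt (1 - 2*γ*(d:ℝ)/((d:ℝ)-2) - xΛ^2), xΛ))
    (μ1 μ2 : ℝ) (hμ1 : μ1 = -2)
    (hμ2 : μ2 = -(2*(1+wm)*(1 - 2*γ*(d:ℝ)/((d:ℝ)-2)))/B) :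
    G p = 0
    ∧ (∃ v : ℝ × ℝ × ℝ, v ≠ 0 ∧ fderiv ℝ G p v = 0)
    ∧ (∃ v : ℝ × ℝ × ℝ, v ≠ 0 ∧ fderiv ℝ G p v = μ1 • v)
    ∧ (∃ v : ℝ × ℝ × ℝ, v ≠ 0 ∧ fderiv ℝ G p v = μ2 • v)
    ∧ μ2 < 0 := by
  set A := 1 - 2*γ*(d:ℝ)/((d:ℝ)-2)
  have hA : 0 < A := one_sub_two_mul_mul_div_pos (by norm_cast) hγ
  set s := Real.sqrt (A - xΛ^2)
  have hs : s ^ 2 + xΛ ^ 2 = A := by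
    rw [Real.sq_sqrt (by linarith [(Real.le_sqrt hxΛ0 hA.le).mp hxΛ1])]
    ring
  have hfix : (1+wm)/B * (s ^ 2 + xΛ ^ 2) = A*(1+wm)/B := by rw [hs]; ring
  have hne : ¬ (s = 0 ∧ xΛ = 0) := by
    rintro ⟨hs0, hx0⟩
    rw [hs0, hx0] at hs
    linarith
  have hG' : G = kgrField ((1-wm)/B) ((1+wm)/B) (A*(1+wm)/B) := by
    funext q
    rw [hG, kgrField]
    ext <;> simp <;> ring
  subst hp hμ1 hμ2
  rw [hG']
  refine ⟨kgrField_zero_fst hfix,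
    ⟨(0, xΛ, -s), by simpa [Prod.ext_iff, and_comm] using hne,
      fderiv_kgrField_zero_fst_apply_tangent hfix⟩,
    ⟨(1, 0, 0), by simp [Prod.ext_iff], fderiv_kgrField_zero_fst_apply_fst_axis hfix⟩,
    ⟨(0, s, xΛ), by simpa [Prod.ext_iff] using hne, ?_⟩, ?_⟩
  · rw [fderiv_kgrField_zero_fst_apply_self hfix]
    congr 1
    ring
  · have hw' : 0 < 1 + wm := by linarith
    exact div_neg_of_neg_of_pos (neg_neg_of_pos (by positivity)) hB0

theorem stmt_18 (d : ℕ) (hd : 3 ≤ d) (γ wm : ℝ)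
    (hγ : γ < ((d:ℝ)-2)/(2*(d:ℝ))) (hw : -1 < wm)
    (B : ℝ) (hB : B = 1 - 2*γ*((d:ℝ)-1)*(1+wm)/((d:ℝ)-2)) (hB0 : 0 < B)
    (xΛ : ℝ) (hxΛ0 : 0 ≤ xΛ)
    (hxΛ1 : xΛ ≤ Real.sqrt (1 - 2*γ*(d:ℝ)/((d:ℝ)-2)))
    (G : ℝ × ℝ × ℝ → ℝ × ℝ × ℝ)
    (hG : ∀ p : ℝ × ℝ × ℝ, G p =
      ( ((1 - 2*γ*(d:ℝ)/((d:ℝ)-2))*(1+wm)/B - 2)*p.1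
          + ((1-wm)/B)*p.1^3 - ((1+wm)/B)*p.1*(p.2.1^2 + p.2.2^2) ,
        ((1 - 2*γ*(d:ℝ)/((d:ℝ)-2))*(1+wm)/B)*p.2.1
          + ((1-wm)/B)*p.2.1*p.1^2 - ((1+wm)/B)*p.2.1*(p.2.1^2 + p.2.2^2) ,
        ((1 - 2*γ*(d:ℝ)/((d:ℝ)-2))*(1+wm)/B)*p.2.2
          + ((1-wm)/B)*p.2.2*p.1^2
          - ((1+wm)/B)*p.2.2*(p.2.1^2 + p.2.2^2) ))
    (p : ℝ × ℝ × ℝ)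
    (hp : p = (0, Real.sqrt (1 - 2*γ*(d:ℝ)/((d:ℝ)-2) - xΛ^2), xΛ))
    (μ1 μ2 : ℝ) (hμ1 : μ1 = -2)
    (hμ2 : μ2 = -(2*(1+wm)*(1 - 2*γ*(d:ℝ)/((d:ℝ)-2)))/B) :
    G p = 0
    ∧ (∃ v : ℝ × ℝ × ℝ, v ≠ 0 ∧ fderiv ℝ G p v = 0)
    ∧ (∃ v : ℝ × ℝ × ℝ, v ≠ 0 ∧ fderiv ℝ G p v = μ1 • v)
    ∧ (∃ v : ℝ × ℝ × ℝ, v ≠ 0 ∧ fderiv ℝ G p v = μ2 • v)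
    ∧ μ2 < 0 :=
  stmt_18_general d hd γ wm hγ hw B hB0 xΛ hxΛ0 hxΛ1 G hG p hp μ1 μ2 hμ1 hμ2
end
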